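/- arXiv:2311.17349 — 2 statements merged into one kernel-verified Lean document; each statement's English description precedes it below -/
import Mathlib

section
/- Any solution (p_N^{m+1}, n_N^{m+1}, ψ_N^{m+1}) of Step 1 of the decoupled scheme conserves the discrete masses: ⟨p_N^{m+1}, 1⟩ = ⟨p_N^m, 1⟩ and ⟨n_N^{m+1}, 1⟩ = ⟨n_N^m, 1⟩. -/
open MeasureTheory Real Set

noncomputable section

abbrev Vec2 := ℝ × ℝ

/-- The spatial domain `Ω = (0,2π)²`. -/
def Om : Set Vec2 := Set.Ioo (0:ℝ) (2*π) ×ˢ Set.Ioo (0:ℝ) (2*π)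

/-- Partial derivative in the first space variable. -/
def pdx (f : Vec2 → ℝ) : Vec2 → ℝ := fun z => fderiv ℝ f z (1, 0)

/-- Partial derivative in the second space variable. -/
def pdy (f : Vec2 → ℝ) : Vec2 → ℝ := fun z => fderiv ℝ f z (0, 1)

/-- Spatial gradient. -/
def grad (f : Vec2 → ℝ) (z : Vec2) : Vec2 := (pdx f z, pdy f z)

/-- Euclidean dot product on ℝ². -/
def dotp (a b : Vec2) : ℝ := a.1 * b.1 + a.2 * b.2

/-- Divergence of a vector field. -/
def div2 (v : Vec2 → Vec2) (z : Vec2) : ℝ :=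
  pdx (fun w => (v w).1) z + pdy (fun w => (v w).2) z

/-- Laplacian. -/
def lap (f : Vec2 → ℝ) (z : Vec2) : ℝ := div2 (fun w => grad f w) z

/-- `|∇f|²`. -/
def gradNormSq (f : Vec2 → ℝ) (z : Vec2) : ℝ := (pdx f z)^2 + (pdy f z)^2

/-- `|∇v|²` for a vector field. -/
def vGradNormSq (v : Vec2 → Vec2) (z : Vec2) : ℝ :=
  gradNormSq (fun w => (v w).1) z + gradNormSq (fun w => (v w).2) z

/-- Componentwise Laplacian of a vector field. -/
def lapV (v : Vec2 → Vec2) (z : Vec2) : Vec2 :=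
  (lap (fun w => (v w).1) z, lap (fun w => (v w).2) z)

/-- Convective derivative `(u·∇)v`. -/
def convV (u v : Vec2 → Vec2) (z : Vec2) : Vec2 :=
  (dotp (u z) (grad (fun w => (v w).1) z), dotp (u z) (grad (fun w => (v w).2) z))

/-- `2π`-periodicity in both space variables. -/
def Periodic2 (f : Vec2 → ℝ) : Prop :=
  (∀ x y : ℝ, f (x + 2*π, y) = f (x, y)) ∧ (∀ x y : ℝ, f (x, y + 2*π) = f (x, y))

def Periodic2V (v : Vec2 → Vec2) : Prop :=
  Periodic2 (fun z => (v z).1) ∧ Periodic2 (fun z => (v z).2)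

/-- Time derivative. -/
def tderiv (p : ℝ → Vec2 → ℝ) (t : ℝ) (z : Vec2) : ℝ := deriv (fun s => p s z) t

def tderivV (u : ℝ → Vec2 → Vec2) (t : ℝ) (z : Vec2) : Vec2 :=
  (tderiv (fun s w => (u s w).1) t z, tderiv (fun s w => (u s w).2) t z)

/-! ### Discrete (spectral) objects -/

/-- The Fourier index box `[-N/2, N/2-1]²`. -/
def trigIdx (N : ℕ) : Finset (ℤ × ℤ) :=
  Finset.Icc (-(N:ℤ)/2) ((N:ℤ)/2 - 1) ×ˢ Finset.Icc (-(N:ℤ)/2) ((N:ℤ)/2 - 1)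

/-- Membership in the space `X_N` of real valued trigonometric polynomials
`span{e^{i(jx+ky)} : -N/2 ≤ j,k ≤ N/2-1}`. -/
def InXN (N : ℕ) (f : Vec2 → ℝ) : Prop :=
  ∃ c : ℤ × ℤ → ℂ, ∀ z : Vec2,
    (f z : ℂ) = ∑ jk ∈ trigIdx N,
      c jk * Complex.exp (Complex.I * ((jk.1 : ℂ) * (z.1 : ℂ) + (jk.2 : ℂ) * (z.2 : ℂ)))

def InXN2 (N : ℕ) (v : Vec2 → Vec2) : Prop :=
  InXN N (fun z => (v z).1) ∧ InXN N (fun z => (v z).2)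

/-- The Fourier collocation points `Σ_N`. -/
def colloc (N : ℕ) : Set Vec2 :=
  {z | ∃ i j : ℕ, i < N ∧ j < N ∧ z = (2*π*i/N, 2*π*j/N)}

/-- `L²(Ω)` inner product. -/
def ip (f g : Vec2 → ℝ) : ℝ := ∫ z in Om, f z * g z

def ipV (u v : Vec2 → Vec2) : ℝ := ∫ z in Om, dotp (u z) (v z)

/-- `L²(Ω)` norm. -/
def nrm (f : Vec2 → ℝ) : ℝ := Real.sqrt (ip f f)

def nrmV (u : Vec2 → Vec2) : ℝ := Real.sqrt (ipV u u)

def gradNrmSqInt (f : Vec2 → ℝ) : ℝ := ∫ z in Om, gradNormSq f z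

def vGradNrmSqInt (v : Vec2 → Vec2) : ℝ := ∫ z in Om, vGradNormSq v z

/-- `H¹(Ω)` norm. -/
def h1nrm (f : Vec2 → ℝ) : ℝ := Real.sqrt (ip f f + gradNrmSqInt f)

def h1nrmV (v : Vec2 → Vec2) : ℝ := Real.sqrt (ipV v v + vGradNrmSqInt v)

/-- The `L²`-orthogonal projection `Π_N` onto `X_N` (defined via choice). -/
def projN (N : ℕ) (f : Vec2 → ℝ) : Vec2 → ℝ :=
  open Classical in
  if h : ∃ g, InXN N g ∧ ∀ v, InXN N v → (∫ z in Om, (f z - g z) * v z) = 0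
  then h.choose else fun _ => 0

def projN2 (N : ℕ) (v : Vec2 → Vec2) : Vec2 → Vec2 :=
  fun z => (projN N (fun w => (v w).1) z, projN N (fun w => (v w).2) z)

/-! ### The decoupled scheme -/

/-- Step 1 of the decoupled scheme (the PNP part). -/
def Step1 (N : ℕ) (dt : ℝ) (pm nm : Vec2 → ℝ) (um : Vec2 → Vec2)
    (p1 n1 ψ1 : Vec2 → ℝ) : Prop :=
  InXN N p1 ∧ InXN N n1 ∧ InXN N ψ1 ∧ (∫ z in Om, ψ1 z) = 0 ∧
  (∀ v, InXN N v →
    (∫ z in Om, ((p1 z - pm z)/dt) * v z)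
      - (∫ z in Om, dotp (pm z • um z) (grad v z))
      + (∫ z in Om, (pm z * (1 + 2*dt*pm z)) *
          dotp (grad (fun w => Real.log (p1 w) + ψ1 w) z) (grad v z)) = 0) ∧
  (∀ v, InXN N v →
    (∫ z in Om, ((n1 z - nm z)/dt) * v z)
      - (∫ z in Om, dotp (nm z • um z) (grad v z))
      + (∫ z in Om, (nm z * (1 + 2*dt*nm z)) *
          dotp (grad (fun w => Real.log (n1 w) - ψ1 w) z) (grad v z)) = 0) ∧
  (∀ v, InXN N v →
    (∫ z in Om, dotp (grad ψ1 z) (grad v z)) = ∫ z in Om, (p1 z - n1 z) * v z)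

/-- Step 2 of the decoupled scheme (velocity prediction). -/
def Step2 (N : ℕ) (dt : ℝ) (pm nm φm : Vec2 → ℝ) (um : Vec2 → Vec2)
    (p1 n1 ψ1 : Vec2 → ℝ) (ut : Vec2 → Vec2) : Prop :=
  InXN2 N ut ∧
  ∀ w, InXN2 N w →
    (∫ z in Om, dotp ((1/dt) • (ut z - um z)) (w z))
    + (∫ z in Om, dotp (convV um ut z) (w z))
    + (∫ z in Om, (dotp (grad (fun y => (ut y).1) z) (grad (fun y => (w y).1) z)
        + dotp (grad (fun y => (ut y).2) z) (grad (fun y => (w y).2) z)))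
    + (∫ z in Om, dotp (grad φm z) (w z))
    + (∫ z in Om, dotp (pm z • grad (fun y => Real.log (p1 y) + ψ1 y) z
        + nm z • grad (fun y => Real.log (n1 y) - ψ1 y) z) (w z)) = 0

/-- Step 3 of the decoupled scheme (pressure correction / projection). -/
def Step3 (N : ℕ) (dt : ℝ) (φm : Vec2 → ℝ) (ut : Vec2 → Vec2)
    (u1 : Vec2 → Vec2) (φ1 : Vec2 → ℝ) : Prop :=
  InXN2 N u1 ∧ InXN N φ1 ∧ (∫ z in Om, φ1 z) = 0 ∧
  (∀ w, InXN2 N w →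
    (∫ z in Om, dotp ((1/dt) • (u1 z - ut z)) (w z))
    + (∫ z in Om, dotp (grad (fun y => φ1 y - φm y) z) (w z)) = 0) ∧
  (∀ q, InXN N q → (∫ z in Om, dotp (u1 z) (grad q z)) = 0)

/-- Admissibility of the data for one step of the scheme. -/
def SchemeData (N : ℕ) (pm nm φm : Vec2 → ℝ) (um : Vec2 → Vec2) : Prop :=
  InXN N pm ∧ InXN N nm ∧ InXN N φm ∧ InXN2 N um ∧
  (∫ z in Om, (pm z - nm z)) = 0 ∧ (∀ z, div2 um z = 0)

lemma inXN_const {N : ℕ} (hN : 2 ≤ N) (c : ℝ) : InXN N (fun _ => c) := by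
  have hzero : ((0 : ℤ), (0 : ℤ)) ∈ trigIdx N := by
    simp only [trigIdx, Finset.mem_product, Finset.mem_Icc]
    omega
  refine ⟨fun jk => if jk = (0, 0) then (c : ℂ) else 0, fun z => ?_⟩
  rw [Finset.sum_eq_single_of_mem _ hzero fun jk _ hjk => by simp [hjk]]
  simp

lemma InXN.continuous {N : ℕ} {f : Vec2 → ℝ} (hf : InXN N f) : Continuous f := by
  obtain ⟨c, hc⟩ := hf
  have hre : f = fun z => (∑ jk ∈ trigIdx N,
      c jk * Complex.exp (Complex.I * ((jk.1 : ℂ) * (z.1 : ℂ) + (jk.2 : ℂ) * (z.2 : ℂ)))).re := by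
    funext z
    rw [← hc z, Complex.ofReal_re]
  rw [hre]
  fun_prop

lemma Continuous.integrableOn_Om {f : Vec2 → ℝ} (hf : Continuous f) : IntegrableOn f Om :=
  (hf.continuousOn.integrableOn_compact (isCompact_Icc.prod isCompact_Icc)).mono_set
    (Set.prod_mono Set.Ioo_subset_Icc_self Set.Ioo_subset_Icc_self)

lemma grad_const (c : ℝ) (z : Vec2) : grad (fun _ => c) z = 0 := by
  simp [grad, pdx, pdy]

/-- Testing a conservative weak form of the shape of Step 1 with `v = 1`, which lies in `X_N`
and has zero gradient, leaves only the discrete time derivative. -/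
lemma ip_one_eq_of_weak_form {N : ℕ} (hN : 2 ≤ N) {dt : ℝ} (hdt : dt ≠ 0)
    {a b k : Vec2 → ℝ} {w g : Vec2 → Vec2} (ha : InXN N a) (hb : InXN N b)
    (hweak : ∀ v, InXN N v →
      (∫ z in Om, ((a z - b z) / dt) * v z) - (∫ z in Om, dotp (w z) (grad v z))
        + (∫ z in Om, k z * dotp (g z) (grad v z)) = 0) :
    ip a (fun _ => 1) = ip b (fun _ => 1) := by
  have hdiff : (∫ z in Om, (a z - b z)) / dt = 0 := by
    simpa [grad_const, dotp, integral_div] using hweak _ (inXN_const hN 1)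
  have hsub := integral_sub ha.continuous.integrableOn_Om hb.continuous.integrableOn_Om
  simp only [ip, mul_one]
  linarith [(div_eq_zero_iff.mp hdiff).resolve_right hdt]

theorem discrete_mass_conservation_general
    (N : ℕ) (hN : Even N) (hN2 : 0 < N) (dt : ℝ) (hdt : 0 < dt)
    (pm nm φm : Vec2 → ℝ) (um : Vec2 → Vec2)
    (hdata : SchemeData N pm nm φm um)
    (p1 n1 ψ1 : Vec2 → ℝ)
    (hstep1 : Step1 N dt pm nm um p1 n1 ψ1) :
    ip p1 (fun _ => 1) = ip pm (fun _ => 1) ∧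
    ip n1 (fun _ => 1) = ip nm (fun _ => 1) := by
  obtain ⟨hp1, hn1, -, -, hp_weak, hn_weak, -⟩ := hstep1
  have h2N : 2 ≤ N := by
    obtain ⟨k, rfl⟩ := hN
    omega
  exact ⟨ip_one_eq_of_weak_form h2N hdt.ne' hp1 hdata.1 hp_weak,
    ip_one_eq_of_weak_form h2N hdt.ne' hn1 hdata.2.1 hn_weak⟩

/-- discrete mass conservation: any solution
`(p_N^{m+1}, n_N^{m+1}, ψ_N^{m+1})` of Step 1 of the decoupled scheme conserves the discrete
masses: `⟨p_N^{m+1}, 1⟩ = ⟨p_N^m, 1⟩` and `⟨n_N^{m+1}, 1⟩ = ⟨n_N^m, 1⟩`. -/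
theorem discrete_mass_conservation
    (N : ℕ) (hN : Even N) (hN2 : 0 < N) (dt : ℝ) (hdt : 0 < dt)
    (pm nm φm : Vec2 → ℝ) (um : Vec2 → Vec2)
    (hdata : SchemeData N pm nm φm um)
    (hpm : ∀ z, 0 < pm z) (hnm : ∀ z, 0 < nm z)
    (p1 n1 ψ1 : Vec2 → ℝ)
    (hstep1 : Step1 N dt pm nm um p1 n1 ψ1) :
    ip p1 (fun _ => 1) = ip pm (fun _ => 1) ∧
    ip n1 (fun _ => 1) = ip nm (fun _ => 1) :=
  discrete_mass_conservation_general N hN hN2 dt hdt pm nm φm um hdata p1 n1 ψ1 hstep1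

end
end

section
/- Let (p, n, ψ, u) be a global strong solution of the PNP–NS system with periodic boundary conditions. Then for all 0 ≤ t₀ ≤ t, ‖p(t)‖_{L^∞(Ω)} ≤ ‖p(t₀)‖_{L^∞(Ω)} · exp( ∫_{t₀}^{t} ‖Δψ(s)‖_{L^∞(Ω)} ds ). -/
open MeasureTheory Real Set

noncomputable section

/-- Iterated spatial partial derivatives `∂_x^i ∂_y^j`. -/
def pdIter (i j : ℕ) (f : Vec2 → ℝ) : Vec2 → ℝ := pdx^[i] (pdy^[j] f)

/-- Squared `H^s(Ω)` (Sobolev) norm via iterated partial derivatives. -/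
def hSobSq (s : ℕ) (f : Vec2 → ℝ) : ℝ :=
  ∑ i ∈ Finset.range (s+1), ∑ j ∈ Finset.range (s+1-i), ∫ z in Om, (pdIter i j f z)^2

def hSobSqV (s : ℕ) (v : Vec2 → Vec2) : ℝ :=
  hSobSq s (fun z => (v z).1) + hSobSq s (fun z => (v z).2)

/-- `L^r(Ω)` norm (for a real exponent `r`). -/
def lrNrm (r : ℝ) (f : Vec2 → ℝ) : ℝ := (∫ z in Om, |f z| ^ r) ^ (1/r)

/-- A global (in time) strong solution of the PNP–NS system with periodic boundary
conditions and initial data `(p^in, n^in, u^in)`; `ψ` and the pressure are normalized to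
have zero mean. -/
structure IsGlobalStrongSol (pin nin : Vec2 → ℝ) (uin : Vec2 → Vec2)
    (p n ψ Pr : ℝ → Vec2 → ℝ) (u : ℝ → Vec2 → Vec2) : Prop where
  cont_p : Continuous (fun qz : ℝ × Vec2 => p qz.1 qz.2)
  cont_n : Continuous (fun qz : ℝ × Vec2 => n qz.1 qz.2)
  cont_psi : Continuous (fun qz : ℝ × Vec2 => ψ qz.1 qz.2)
  cont_u : Continuous (fun qz : ℝ × Vec2 => u qz.1 qz.2)
  init_p : ∀ z, p 0 z = pin z
  init_n : ∀ z, n 0 z = nin z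
  init_u : ∀ z, u 0 z = uin z
  periodic : ∀ t, Periodic2 (p t) ∧ Periodic2 (n t) ∧ Periodic2 (ψ t) ∧ Periodic2 (Pr t)
      ∧ Periodic2V (u t)
  reg_space : ∀ t > (0:ℝ), ContDiff ℝ 2 (p t) ∧ ContDiff ℝ 2 (n t) ∧ ContDiff ℝ 2 (ψ t)
      ∧ ContDiff ℝ 1 (Pr t) ∧ ContDiff ℝ 2 (fun z => u t z)
  reg_time : ∀ t > (0:ℝ), ∀ z, DifferentiableAt ℝ (fun s => p s z) t
      ∧ DifferentiableAt ℝ (fun s => n s z) t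
      ∧ DifferentiableAt ℝ (fun s => (u s z).1) t
      ∧ DifferentiableAt ℝ (fun s => (u s z).2) t
  mean_psi : ∀ t, (∫ z in Om, ψ t z) = 0
  mean_Pr : ∀ t, (∫ z in Om, Pr t z) = 0
  eq_p : ∀ t > (0:ℝ), ∀ z,
    tderiv p t z + dotp (u t z) (grad (p t) z)
      = div2 (fun w => grad (p t) w + p t w • grad (ψ t) w) z
  eq_n : ∀ t > (0:ℝ), ∀ z,
    tderiv n t z + dotp (u t z) (grad (n t) z)
      = div2 (fun w => grad (n t) w - n t w • grad (ψ t) w) z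
  eq_psi : ∀ t > (0:ℝ), ∀ z, -(lap (ψ t) z) = p t z - n t z
  eq_u : ∀ t > (0:ℝ), ∀ z,
    tderivV u t z + convV (u t) (u t) z - lapV (u t) z + grad (Pr t) z
      = -((p t z - n t z) • grad (ψ t) z)
  eq_div : ∀ t > (0:ℝ), ∀ z, div2 (u t) z = 0

/-- The `L^∞(Ω)` norm of a function (supremum of `|f|` over `Ω`). -/
def supAbs (f : Vec2 → ℝ) : ℝ := sSup ((fun z => |f z|) '' Om)

/-!
Let `M(t) = ‖p(t)‖_∞`. At a point where `|p(T)|` is maximal, `∇p = 0` and `sign p · Δp ≤ 0`, so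
the equation `∂ₜp + u·∇p = Δp + ∇p·∇ψ + p Δψ` gives `sign p · ∂ₜp ≤ M(T) ‖Δψ(T)‖_∞` there. Hence
`M` never reaches the barrier `(M(t₀) + ε) exp ∫_{t₀}^t (‖Δψ‖_∞ + ε)`: at a first contact time
the left slope of `M` would have to exceed what the equation allows. Let `ε → 0`.
-/

open Filter Topology

theorem IsLocalMax.deriv_deriv_nonpos {g : ℝ → ℝ} {x₀ : ℝ} (h : IsLocalMax g x₀)
    (hc : ContinuousAt g x₀) : deriv (deriv g) x₀ ≤ 0 := by
  by_contra! hpos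
  -- a strict second-derivative test would make `x₀` a local minimum too, so `g` is flat there
  have hmin := isLocalMin_of_deriv_deriv_pos hpos h.deriv_eq_zero hc
  have hflat : g =ᶠ[𝓝 x₀] fun _ => g x₀ := (hmin.and h).mono fun _ hx => le_antisymm hx.2 hx.1
  have hderiv : deriv g =ᶠ[𝓝 x₀] fun _ => 0 :=
    hflat.eventuallyEq_nhds.mono fun _ hx => by simp [hx.deriv_eq]
  simp [hderiv.deriv_eq] at hpos

theorem IsLocalMax.fderiv_fderiv_apply_nonpos {E : Type*} [NormedAddCommGroup E]
    [NormedSpace ℝ E] {f : E → ℝ} {z : E} (h : IsLocalMax f z) (hf : ContDiff ℝ 2 f) (v : E) :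
    fderiv ℝ (fun w => fderiv ℝ f w v) z v ≤ 0 := by
  have hline : Continuous fun x : ℝ => z + x • v := by fun_prop
  have hline' (x : ℝ) : HasDerivAt (fun x : ℝ => z + x • v) v x := by
    simpa using ((hasDerivAt_id x).smul_const v).const_add z
  have hmax : IsLocalMax (fun x : ℝ => f (z + x • v)) 0 :=
    IsLocalMax.comp_continuous (f := f) (by simpa using h) hline.continuousAt
  have hderiv : deriv (fun x : ℝ => f (z + x • v)) = fun x => fderiv ℝ f (z + x • v) v := by
    funext x
    exact ((hf.differentiable two_ne_zero _).hasFDerivAt.comp_hasDerivAt x (hline' x)).deriv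
  have hdf : DifferentiableAt ℝ (fun w => fderiv ℝ f w v) (z + (0 : ℝ) • v) :=
    ((hf.fderiv_right (m := 1) (by norm_num)).clm_apply contDiff_const).differentiable
      one_ne_zero _
  have h2 : deriv (deriv fun x : ℝ => f (z + x • v)) 0
      = fderiv ℝ (fun w => fderiv ℝ f w v) z v := by
    rw [hderiv]
    simpa [Function.comp_def] using (hdf.hasFDerivAt.comp_hasDerivAt 0 (hline' 0)).deriv
  rw [← h2]
  exact hmax.deriv_deriv_nonpos ((hf.continuous.comp hline).continuousAt)

theorem sign_mul_le_abs {α : Type*} [Ring α] [LinearOrder α] [IsStrictOrderedRing α] (x y : α) :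
    (SignType.sign x : α) * y ≤ |y| := by
  rcases lt_trichotomy x 0 with hx | rfl | hx
  · simpa [sign_neg hx] using neg_le_abs y
  · simp
  · simpa [sign_pos hx] using le_abs_self y

theorem HasDerivAt.nonneg_of_forall_Ico_le {f : ℝ → ℝ} {f' a b : ℝ} (hf : HasDerivAt f f' b)
    (hab : a < b) (hmax : ∀ s ∈ Ico a b, f s ≤ f b) : 0 ≤ f' := by
  have hmaxOn : IsLocalMaxOn f (Icc a b) b := IsMaxOn.localize fun s hs =>
    (eq_or_lt_of_le hs.2).elim (fun h => by simp [h]) fun h => hmax s ⟨hs.1, h⟩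
  have hcone : a - b ∈ posTangentConeAt (Icc a b) b :=
    sub_mem_posTangentConeAt_of_segment_subset (by rw [segment_symm, segment_eq_Icc hab.le])
  have := hmaxOn.hasFDerivWithinAt_nonpos hf.hasFDerivAt.hasFDerivWithinAt hcone
  simp only [ContinuousLinearMap.toSpanSingleton_apply, smul_eq_mul] at this
  exact nonneg_of_mul_nonpos_right this (sub_neg.mpr hab)

theorem exists_first_eq_of_lt_of_le {M B : ℝ → ℝ} {a b : ℝ} (hM : Continuous M)
    (hB : Continuous B) (ha : M a < B a) (hb : B b ≤ M b) (hab : a ≤ b) :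
    ∃ T ∈ Ioc a b, M T = B T ∧ ∀ s ∈ Ico a T, M s < B s := by
  set S := Icc a b ∩ {s | B s ≤ M s}
  have hSbdd : BddBelow S := bddBelow_Icc.mono inter_subset_left
  have hTS : sInf S ∈ S :=
    (isClosed_Icc.inter (isClosed_le hB hM)).csInf_mem ⟨b, ⟨hab, le_rfl⟩, hb⟩ hSbdd
  have hbefore : ∀ s ∈ Ico a (sInf S), M s < B s := fun s hs => not_le.mp fun hBM =>
    (csInf_le hSbdd ⟨⟨hs.1, hs.2.le.trans hTS.1.2⟩, hBM⟩).not_gt hs.2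
  have haT : a < sInf S := lt_of_le_of_ne hTS.1.1 fun h => (h ▸ hTS.2).not_gt ha
  have hMB : M (sInf S) ≤ B (sInf S) :=
    closure_minimal (fun s hs => (hbefore s hs).le) (isClosed_le hM hB)
      (by rw [closure_Ico haT.ne]; exact right_mem_Icc.mpr haT.le)
  exact ⟨sInf S, ⟨haT, hTS.1.2⟩, le_antisymm hMB hTS.2, hbefore⟩

theorem lt_mul_exp_integral_add_of_touching {M g : ℝ → ℝ} {a b ε : ℝ} (hab : a ≤ b)
    (hε : 0 < ε) (hM : Continuous M) (hg : Continuous g) (hMa : 0 ≤ M a)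
    (htouch : ∀ T ∈ Ioc a b, ∃ φ : ℝ → ℝ, ∃ φ' : ℝ, HasDerivAt φ φ' T ∧
      (∀ s ∈ Ico a T, φ s ≤ M s) ∧ φ T = M T ∧ φ' ≤ g T * M T) :
    M b < (M a + ε) * exp (∫ s in a..b, (g s + ε)) := by
  set B : ℝ → ℝ := fun x => (M a + ε) * exp (∫ s in a..x, (g s + ε))
  have hgε : Continuous fun s => g s + ε := hg.add continuous_const
  have hB' (x : ℝ) : HasDerivAt B ((g x + ε) * B x) x := by
    have := ((intervalIntegral.integral_hasDerivAt_right (hgε.intervalIntegrable a x)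
      (hgε.stronglyMeasurableAtFilter _ _) hgε.continuousAt).exp).const_mul (M a + ε)
    exact this.congr_deriv (by simp only [B]; ring)
  have hBpos (x : ℝ) : 0 < B x := mul_pos (by linarith) (exp_pos _)
  have hBcont : Continuous B := continuous_iff_continuousAt.2 fun x => (hB' x).continuousAt
  by_contra! hb
  obtain ⟨T, hT, hMT, hbefore⟩ :=
    exists_first_eq_of_lt_of_le hM hBcont (by simp [B]; linarith) hb hab
  obtain ⟨φ, φ', hφ, hφM, hφT, hφ'⟩ := htouch T hT
  -- `φ - B` vanishes at `T` and is negative on `[a, T)`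
  have hslope : 0 ≤ φ' - (g T + ε) * B T :=
    (hφ.sub (hB' T)).nonneg_of_forall_Ico_le hT.1 fun s hs => by
      simp only [Pi.sub_apply]
      linarith [hφM s hs, hbefore s hs]
  rw [hMT] at hφ'
  nlinarith [mul_pos hε (hBpos T)]

theorem le_mul_exp_integral_of_touching {M g : ℝ → ℝ} {a b : ℝ} (hab : a ≤ b)
    (hM : Continuous M) (hg : Continuous g) (hMa : 0 ≤ M a)
    (htouch : ∀ T ∈ Ioc a b, ∃ φ : ℝ → ℝ, ∃ φ' : ℝ, HasDerivAt φ φ' T ∧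
      (∀ s ∈ Ico a T, φ s ≤ M s) ∧ φ T = M T ∧ φ' ≤ g T * M T) :
    M b ≤ M a * exp (∫ s in a..b, g s) := by
  have hlim : Tendsto (fun ε => (M a + ε) * exp ((∫ s in a..b, g s) + (b - a) * ε))
      (𝓝[>] 0) (𝓝 (M a * exp (∫ s in a..b, g s))) := by
    have hcont : Continuous fun ε => (M a + ε) * exp ((∫ s in a..b, g s) + (b - a) * ε) := by
      fun_prop
    simpa using (hcont.tendsto 0).mono_left nhdsWithin_le_nhds
  refine ge_of_tendsto hlim (eventually_nhdsWithin_of_forall fun ε hε => ?_)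
  have := lt_mul_exp_integral_add_of_touching hab hε hM hg hMa htouch
  rw [intervalIntegral.integral_add (hg.intervalIntegrable a b) intervalIntegrable_const,
    intervalIntegral.integral_const, smul_eq_mul] at this
  exact this.le

section PlaneOperators

variable {f ψ : Vec2 → ℝ} {z : Vec2}

theorem ContDiff.pdx {n : WithTop ℕ∞} (hf : ContDiff ℝ (n + 1) f) : ContDiff ℝ n (pdx f) :=
  (hf.fderiv_right le_rfl).clm_apply contDiff_const

theorem ContDiff.pdy {n : WithTop ℕ∞} (hf : ContDiff ℝ (n + 1) f) : ContDiff ℝ n (pdy f) :=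
  (hf.fderiv_right le_rfl).clm_apply contDiff_const

theorem pdx_const_smul (c : ℝ) (f : Vec2 → ℝ) : pdx (c • f) = c • pdx f := by
  funext w
  simp [pdx, fderiv_const_smul_field]

theorem pdy_const_smul (c : ℝ) (f : Vec2 → ℝ) : pdy (c • f) = c • pdy f := by
  funext w
  simp [pdy, fderiv_const_smul_field]

theorem grad_const_smul (c : ℝ) (f : Vec2 → ℝ) (z : Vec2) : grad (c • f) z = c • grad f z := by
  simp [grad, pdx_const_smul, pdy_const_smul]

theorem lap_const_smul (c : ℝ) (f : Vec2 → ℝ) (z : Vec2) : lap (c • f) z = c * lap f z := by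
  show pdx (pdx (c • f)) z + pdy (pdy (c • f)) z = c * (pdx (pdx f) z + pdy (pdy f) z)
  simp only [pdx_const_smul, pdy_const_smul, Pi.smul_apply, smul_eq_mul]
  ring

theorem IsLocalMax.grad_eq_zero (h : IsLocalMax f z) : grad f z = 0 := by
  simp [grad, pdx, pdy, h.fderiv_eq_zero]

theorem IsLocalMax.lap_nonpos (h : IsLocalMax f z) (hf : ContDiff ℝ 2 f) : lap f z ≤ 0 :=
  add_nonpos (h.fderiv_fderiv_apply_nonpos hf (1, 0)) (h.fderiv_fderiv_apply_nonpos hf (0, 1))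

theorem div2_grad_add_smul_grad (hf : ContDiff ℝ 2 f) (hψ : ContDiff ℝ 2 ψ) (z : Vec2) :
    div2 (fun w => grad f w + f w • grad ψ w) z
      = lap f z + dotp (grad f z) (grad ψ z) + f z * lap ψ z := by
  have hf1 : Differentiable ℝ f := hf.differentiable two_ne_zero
  have hfx : Differentiable ℝ (pdx f) := hf.pdx.differentiable one_ne_zero
  have hfy : Differentiable ℝ (pdy f) := hf.pdy.differentiable one_ne_zero
  have hψx : Differentiable ℝ (pdx ψ) := hψ.pdx.differentiable one_ne_zero
  have hψy : Differentiable ℝ (pdy ψ) := hψ.pdy.differentiable one_ne_zero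
  show fderiv ℝ (fun w => pdx f w + f w * pdx ψ w) z (1, 0)
      + fderiv ℝ (fun w => pdy f w + f w * pdy ψ w) z (0, 1)
    = fderiv ℝ (pdx f) z (1, 0) + fderiv ℝ (pdy f) z (0, 1)
      + (pdx f z * pdx ψ z + pdy f z * pdy ψ z)
      + f z * (fderiv ℝ (pdx ψ) z (1, 0) + fderiv ℝ (pdy ψ) z (0, 1))
  rw [fderiv_fun_add (hfx z) ((hf1 z).fun_mul (hψx z)),
    fderiv_fun_add (hfy z) ((hf1 z).fun_mul (hψy z)), fderiv_fun_mul (hf1 z) (hψx z),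
    fderiv_fun_mul (hf1 z) (hψy z)]
  simp only [add_apply, smul_apply, smul_eq_mul, pdx, pdy]
  ring

theorem mul_div2_flux_sub_dotp_le_of_isLocalMax {v : Vec2} {c : ℝ} (hf : ContDiff ℝ 2 f)
    (hψ : ContDiff ℝ 2 ψ) (hmax : IsLocalMax (c • f) z) :
    c * (div2 (fun w => grad f w + f w • grad ψ w) z - dotp v (grad f z))
      ≤ c * f z * lap ψ z := by
  have hgrad : c • grad f z = 0 := by rw [← grad_const_smul]; exact hmax.grad_eq_zero
  have hlap : c * lap f z ≤ 0 := by rw [← lap_const_smul]; exact hmax.lap_nonpos (hf.const_smul c)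
  obtain ⟨hx, hy⟩ := Prod.ext_iff.mp hgrad
  simp only [grad, Prod.smul_mk, smul_eq_mul, Prod.fst_zero, Prod.snd_zero] at hx hy
  rw [div2_grad_add_smul_grad hf hψ]
  simp only [dotp, grad]
  linear_combination hlap + (pdx ψ z - v.1) * hx + (pdy ψ z - v.2) * hy

end PlaneOperators

theorem closure_Om : closure Om = Icc 0 (2 * π) ×ˢ Icc 0 (2 * π) := by
  rw [Om, closure_prod_eq, closure_Ioo two_pi_pos.ne]

theorem isCompact_closure_Om : IsCompact (closure Om) := by
  rw [closure_Om]; exact isCompact_Icc.prod isCompact_Icc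

theorem Om_nonempty : Om.Nonempty :=
  ⟨(π, π), ⟨⟨pi_pos, by linarith [pi_pos]⟩, ⟨pi_pos, by linarith [pi_pos]⟩⟩⟩

theorem Periodic2.sub {f g : Vec2 → ℝ} (hf : Periodic2 f) (hg : Periodic2 g) :
    Periodic2 (fun z => f z - g z) :=
  ⟨fun x y => by simp only [hf.1, hg.1], fun x y => by simp only [hf.2, hg.2]⟩

theorem Periodic2.exists_mem_closure_Om {f : Vec2 → ℝ} (hf : Periodic2 f) (w : Vec2) :
    ∃ w' ∈ closure Om, f w' = f w := by
  obtain ⟨x, hx, hfx⟩ := Function.Periodic.exists_mem_Ico₀ (f := fun x => f (x, w.2))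
    (fun x => hf.1 x w.2) two_pi_pos w.1
  obtain ⟨y, hy, hfy⟩ := Function.Periodic.exists_mem_Ico₀ (f := fun y => f (x, y))
    (fun y => hf.2 x y) two_pi_pos w.2
  refine ⟨(x, y), closure_Om ▸ ⟨Ico_subset_Icc_self hx, Ico_subset_Icc_self hy⟩, ?_⟩
  exact hfy.symm.trans hfx.symm

theorem supAbs_eq_sSup_closure {f : Vec2 → ℝ} (hf : Continuous f) :
    supAbs f = sSup ((fun z => |f z|) '' closure Om) := by
  obtain ⟨z, hz, hsup, hmax⟩ := isCompact_closure_Om.exists_sSup_image_eq_and_ge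
    Om_nonempty.closure hf.abs.continuousOn
  rw [hsup]
  refine le_antisymm (csSup_le (Om_nonempty.image _) ?_) ?_
  · rintro _ ⟨w, hw, rfl⟩
    exact hmax w (subset_closure hw)
  · have hzcl : |f z| ∈ closure ((fun z => |f z|) '' Om) :=
      image_closure_subset_closure_image hf.abs ⟨z, hz, rfl⟩
    have hub : sSup ((fun z => |f z|) '' Om) ∈ upperBounds ((fun z => |f z|) '' Om) :=
      fun _ hb => le_csSup ((isCompact_closure_Om.image hf.abs).bddAbove.mono
        (image_mono subset_closure)) hb
    rw [← upperBounds_closure] at hub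
    exact hub hzcl

theorem abs_le_supAbs {f : Vec2 → ℝ} (hf : Continuous f) (hper : Periodic2 f) (w : Vec2) :
    |f w| ≤ supAbs f := by
  obtain ⟨w', hw', hfw⟩ := hper.exists_mem_closure_Om w
  rw [← hfw, supAbs_eq_sSup_closure hf]
  exact le_csSup (isCompact_closure_Om.image hf.abs).bddAbove ⟨w', hw', rfl⟩

theorem exists_abs_eq_supAbs {f : Vec2 → ℝ} (hf : Continuous f) : ∃ z, |f z| = supAbs f := by
  obtain ⟨z, -, hsup, -⟩ := isCompact_closure_Om.exists_sSup_image_eq_and_ge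
    Om_nonempty.closure hf.abs.continuousOn
  exact ⟨z, by rw [supAbs_eq_sSup_closure hf, hsup]⟩

theorem supAbs_nonneg {f : Vec2 → ℝ} (hf : Continuous f) : 0 ≤ supAbs f := by
  obtain ⟨z, hz⟩ := exists_abs_eq_supAbs hf
  exact hz ▸ abs_nonneg _

theorem continuous_supAbs {F : ℝ → Vec2 → ℝ} (hF : Continuous fun q : ℝ × Vec2 => F q.1 q.2) :
    Continuous fun t => supAbs (F t) := by
  have hFt (t : ℝ) : Continuous (F t) := hF.comp (Continuous.prodMk_right t)
  simp_rw [fun t => supAbs_eq_sSup_closure (hFt t)]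
  exact isCompact_closure_Om.continuous_sSup (f := fun t z => |F t z|) hF.abs

namespace IsGlobalStrongSol

variable {pin nin : Vec2 → ℝ} {uin : Vec2 → Vec2} {p n ψ Pr : ℝ → Vec2 → ℝ}
  {u : ℝ → Vec2 → Vec2}

theorem continuous_p (hsol : IsGlobalStrongSol pin nin uin p n ψ Pr u) (s : ℝ) :
    Continuous (p s) :=
  hsol.cont_p.comp (Continuous.prodMk_right s)

theorem continuous_n_sub_p (hsol : IsGlobalStrongSol pin nin uin p n ψ Pr u) (s : ℝ) :
    Continuous fun z => n s z - p s z :=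
  (hsol.cont_n.comp (Continuous.prodMk_right s)).sub (hsol.continuous_p s)

/-- The witness is `sign (p T z) * p (·, z)` at a point `z` where `|p T|` is maximal. -/
theorem exists_touching (hsol : IsGlobalStrongSol pin nin uin p n ψ Pr u) {T : ℝ} (hT : 0 < T) :
    ∃ φ : ℝ → ℝ, ∃ φ' : ℝ, HasDerivAt φ φ' T ∧ (∀ s, φ s ≤ supAbs (p s)) ∧
      φ T = supAbs (p T) ∧ φ' ≤ supAbs (fun z => n T z - p T z) * supAbs (p T) := by
  have hbound (s : ℝ) (w : Vec2) : |p s w| ≤ supAbs (p s) :=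
    abs_le_supAbs (hsol.continuous_p s) (hsol.periodic s).1 w
  obtain ⟨z, hz⟩ := exists_abs_eq_supAbs (hsol.continuous_p T)
  set c : ℝ := (SignType.sign (p T z) : ℝ)
  have hcz : c * p T z = supAbs (p T) := by rw [sign_mul_self, hz]
  have hmax : IsLocalMax (c • p T) z := Eventually.of_forall fun w => by
    simpa [hcz] using (sign_mul_le_abs _ _).trans (hbound T w)
  obtain ⟨hp2, -, hψ2, -⟩ := hsol.reg_space T hT
  refine ⟨fun s => c * p s z, c * tderiv p T z, (hsol.reg_time T hT z).1.hasDerivAt.const_mul c,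
    fun s => (sign_mul_le_abs _ _).trans (hbound s z), hcz, ?_⟩
  have hpde : tderiv p T z
      = div2 (fun w => grad (p T) w + p T w • grad (ψ T) w) z - dotp (u T z) (grad (p T) z) := by
    linarith [hsol.eq_p T hT z]
  have hpoisson : lap (ψ T) z = n T z - p T z := by linarith [hsol.eq_psi T hT z]
  have hnp : n T z - p T z ≤ supAbs (fun w => n T w - p T w) :=
    (le_abs_self _).trans (abs_le_supAbs (hsol.continuous_n_sub_p T)
      ((hsol.periodic T).2.1.sub (hsol.periodic T).1) z)
  calc c * tderiv p T z ≤ c * p T z * lap (ψ T) z :=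
        hpde ▸ mul_div2_flux_sub_dotp_le_of_isLocalMax hp2 hψ2 hmax
    _ = supAbs (p T) * (n T z - p T z) := by rw [hcz, hpoisson]
    _ ≤ supAbs (p T) * supAbs (fun w => n T w - p T w) :=
        mul_le_mul_of_nonneg_left hnp (supAbs_nonneg (hsol.continuous_p T))
    _ = _ := mul_comm _ _

end IsGlobalStrongSol

theorem Linfty_growth_estimate_general
    (pin nin : Vec2 → ℝ) (uin : Vec2 → Vec2)
    (p n ψ Pr : ℝ → Vec2 → ℝ) (u : ℝ → Vec2 → Vec2)
    (hsol : IsGlobalStrongSol pin nin uin p n ψ Pr u) :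
    ∀ t₀ t : ℝ, 0 ≤ t₀ → t₀ ≤ t →
      supAbs (p t) ≤ supAbs (p t₀)
        * Real.exp (∫ s in Set.Icc t₀ t, supAbs (fun z => lap (ψ s) z)) := by
  intro t₀ t ht₀ ht
  -- Poisson's equation is only imposed for `s > 0`; the endpoint `s = t₀` (maybe `0`) is null.
  have hpoisson : ∫ s in Icc t₀ t, supAbs (fun z => lap (ψ s) z)
      = ∫ s in t₀..t, supAbs (fun z => n s z - p s z) := by
    rw [integral_Icc_eq_integral_Ioc, intervalIntegral.integral_of_le ht]
    refine setIntegral_congr_fun measurableSet_Ioc fun s hs => ?_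
    congr 1
    funext z
    linarith [hsol.eq_psi s (ht₀.trans_lt hs.1) z]
  rw [hpoisson]
  refine le_mul_exp_integral_of_touching ht (continuous_supAbs hsol.cont_p)
    (continuous_supAbs (F := fun s z => n s z - p s z) (hsol.cont_n.sub hsol.cont_p))
    (supAbs_nonneg (hsol.continuous_p t₀)) fun T hT => ?_
  obtain ⟨φ, φ', hφ, hφp, hφT, hφ'⟩ := hsol.exists_touching (ht₀.trans_lt hT.1)
  exact ⟨φ, φ', hφ, fun s _ => hφp s, hφT, hφ'⟩

/-- `L^∞` growth estimate: for a global strong solution of the PNP–NS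
system and all `0 ≤ t₀ ≤ t`,
`‖p(t)‖_{L^∞(Ω)} ≤ ‖p(t₀)‖_{L^∞(Ω)} · exp( ∫_{t₀}^{t} ‖Δψ(s)‖_{L^∞(Ω)} ds )`. -/
theorem Linfty_growth_estimate
    (pin nin : Vec2 → ℝ) (uin : Vec2 → Vec2)
    (p n ψ Pr : ℝ → Vec2 → ℝ) (u : ℝ → Vec2 → Vec2)
    (hpin : ∀ z, 0 < pin z) (hnin : ∀ z, 0 < nin z)
    (hneutral : (∫ z in Om, (pin z - nin z)) = 0)
    (hsol : IsGlobalStrongSol pin nin uin p n ψ Pr u) :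
    ∀ t₀ t : ℝ, 0 ≤ t₀ → t₀ ≤ t →
      supAbs (p t) ≤ supAbs (p t₀)
        * Real.exp (∫ s in Set.Icc t₀ t, supAbs (fun z => lap (ψ s) z)) :=
  Linfty_growth_estimate_general pin nin uin p n ψ Pr u hsol
end
end
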